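/- If t →_G t' for ground terms t, t' of a HORS G, then the value trees of the schemes started at t and t' coincide: ‖G_t‖ = ‖G_{t'}‖. -/

import Mathlib

/-- Simple types: ground type `o` and arrows. -/
inductive Ty : Type
  | o : Ty
  | arr : Ty → Ty → Ty
deriving DecidableEq

namespace Ty

/-- order(o)=0, order(τ₁→τ₂)=max(order τ₁ + 1, order τ₂). -/
def order : Ty → ℕ
  | .o => 0
  | .arr a b => max (a.order + 1) b.order

/-- The list τ₁,...,τ_k such that τ = τ₁ → ... → τ_k → o. -/
def args : Ty → List Ty
  | .o => []
  | .arr a b => a :: b.args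

/-- The arity of a type. -/
def arity (τ : Ty) : ℕ := τ.args.length

/-- The over-bar transformation: ō = o→o, (τ₁→τ₂)̄ = τ̄₁→τ̄₂. -/
def bar : Ty → Ty
  | .o => .arr .o .o
  | .arr a b => .arr a.bar b.bar

end Ty

/-- Applicative terms over a typed alphabet. -/
inductive Tm (α : Type) : Type
  | sym : α → Tm α
  | app : Tm α → Tm α → Tm α

/-- Typing judgment for terms over a typed alphabet. -/
inductive HasType {α : Type} (ty : α → Ty) : Tm α → Ty → Prop
  | sym (a : α) : HasType ty (.sym a) (ty a)
  | app {t s : Tm α} {τ' τ : Ty} :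
      HasType ty t (.arr τ' τ) → HasType ty s τ' → HasType ty (.app t s) τ

/-- `mkApp h [t₁,...,t_k] = h t₁ ... t_k`. -/
def mkApp {α : Type} (h : Tm α) (ts : List (Tm α)) : Tm α := ts.foldl .app h

/-- Subterm relation. -/
inductive Subt {α : Type} : Tm α → Tm α → Prop
  | refl (t : Tm α) : Subt t t
  | appL {s t u : Tm α} : Subt s t → Subt s (.app t u)
  | appR {s t u : Tm α} : Subt s u → Subt s (.app t u)
/-- The typing environment for a rule body with variables of types given by
the argument types of τ. -/
def ruleEnv (Sig Nt : Type) (sigTy : Sig → Ty) (ntTy : Nt → Ty) (τ : Ty) :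
    Sig ⊕ Nt ⊕ Fin τ.arity → Ty
  | .inl a => sigTy a
  | .inr (.inl F) => ntTy F
  | .inr (.inr i) => τ.args.get i

/-- A higher-order recursion scheme. -/
structure HORS where
  /-- terminal symbols -/
  Sig : Type
  sigTy : Sig → Ty
  sigOrder : ∀ a, (sigTy a).order ≤ 1
  /-- non-terminal symbols -/
  Nt : Type
  ntTy : Nt → Ty
  /-- the rewrite rule for each non-terminal `F x₁ ... x_k → e` given by its
  right-hand side, a term over terminals, non-terminals and the variables. -/
  rule : (F : Nt) → Option (Tm (Sig ⊕ Nt ⊕ Fin (ntTy F).arity))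
  ruleTyped : ∀ (F : Nt) (e : Tm (Sig ⊕ Nt ⊕ Fin (ntTy F).arity)), rule F = some e →
    HasType (ruleEnv Sig Nt sigTy ntTy (ntTy F)) e .o
  /-- initial non-terminal -/
  S : Nt
  S_ty : ntTy S = .o

namespace HORS

variable (G : HORS)

/-- Closed (rule-free) terms over terminals and non-terminals. -/
abbrev T : Type := Tm (G.Sig ⊕ G.Nt)

/-- Typing of closed symbols. -/
def symTy : G.Sig ⊕ G.Nt → Ty
  | .inl a => G.sigTy a
  | .inr F => G.ntTy F

/-- Instantiation of a rule body with actual arguments. -/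
def inst {k : ℕ} : Tm (G.Sig ⊕ G.Nt ⊕ Fin k) → (Fin k → G.T) → G.T
  | .sym (.inl a), _ => .sym (.inl a)
  | .sym (.inr (.inl F)), _ => .sym (.inr F)
  | .sym (.inr (.inr i)), ts => ts i
  | .app t s, ts => .app (inst t ts) (inst s ts)

/-- A redex: a fully applied non-terminal possessing a rewrite rule. -/
def IsRedex (t : G.T) : Prop :=
  ∃ (F : G.Nt) (ts : List G.T),
    t = mkApp (.sym (.inr F)) ts ∧ ts.length = (G.ntTy F).arity ∧ (G.rule F).isSome

/-- A term contains a redex. -/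
def HasRedex (t : G.T) : Prop := ∃ s, Subt s t ∧ G.IsRedex s

/-- Unrestricted rewriting. -/
inductive Step : G.T → G.T → Prop
  | head {F : G.Nt} {ts : List G.T} {e} (hr : G.rule F = some e)
      (hl : ts.length = (G.ntTy F).arity) :
      Step (mkApp (.sym (.inr F)) ts) (G.inst e (fun i => ts.get (Fin.cast hl.symm i)))
  | appL {t t' s : G.T} : Step t t' → Step (.app t s) (.app t' s)
  | appR {t s s' : G.T} : Step s s' → Step (.app t s) (.app t s')

/-- Innermost-outermost rewriting: the arguments of the contracted redex
contain no redex. -/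
inductive StepIO : G.T → G.T → Prop
  | head {F : G.Nt} {ts : List G.T} {e} (hr : G.rule F = some e)
      (hl : ts.length = (G.ntTy F).arity) (hio : ∀ s ∈ ts, ¬ G.HasRedex s) :
      StepIO (mkApp (.sym (.inr F)) ts) (G.inst e (fun i => ts.get (Fin.cast hl.symm i)))
  | appL {t t' s : G.T} : StepIO t t' → StepIO (.app t s) (.app t' s)
  | appR {t s s' : G.T} : StepIO s s' → StepIO (.app t s) (.app t s')

/-- Outermost-innermost rewriting: no redex strictly contains the contracted redex. -/
inductive StepOI : G.T → G.T → Prop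
  | head {F : G.Nt} {ts : List G.T} {e} (hr : G.rule F = some e)
      (hl : ts.length = (G.ntTy F).arity) :
      StepOI (mkApp (.sym (.inr F)) ts) (G.inst e (fun i => ts.get (Fin.cast hl.symm i)))
  | appL {t t' s : G.T} : ¬ G.IsRedex (.app t s) → StepOI t t' → StepOI (.app t s) (.app t' s)
  | appR {t s s' : G.T} : ¬ G.IsRedex (.app t s) → StepOI s s' → StepOI (.app t s) (.app t s')

/-- Terms accessible from the initial non-terminal by unrestricted derivations. -/
def Acc' : Set G.T := {t | Relation.ReflTransGen G.Step (.sym (.inr G.S)) t}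

/-- Terms accessible by IO derivations. -/
def AccIO : Set G.T := {t | Relation.ReflTransGen G.StepIO (.sym (.inr G.S)) t}

/-- Terms accessible by OI derivations. -/
def AccOI : Set G.T := {t | Relation.ReflTransGen G.StepOI (.sym (.inr G.S)) t}

end HORS

/-- Possibly infinite trees over Σ ∪ {⊥}, as partial labelings of positions;
`some none` is the label ⊥, `some (some a)` the label a ∈ Σ. -/
def LTree (σ : Type) : Type := List ℕ → Option (Option σ)

/-- The approximation order on trees. -/
def TLe {σ : Type} (t t' : LTree σ) : Prop :=
  ∀ u x, t u = some x → ∃ y, t' u = some y ∧ (x = none ∨ y = x)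

/-- `v` is the least upper bound of the set `A` of trees. -/
def IsTreeLub {σ : Type} (A : Set (LTree σ)) (v : LTree σ) : Prop :=
  (∀ t ∈ A, TLe t v) ∧ ∀ w, (∀ t ∈ A, TLe t w) → TLe v w

/-- Number of arguments in the application spine. -/
def Tm.nArgs {α : Type} : Tm α → ℕ
  | .sym _ => 0
  | .app t _ => t.nArgs + 1

namespace HORS

variable (G : HORS)

/-- The ⊥-transformation: the tree obtained from a term by replacing maximal
non-terminal-headed subterms with ⊥. -/
def bt : G.T → LTree G.Sig
  | .sym (.inl a) => fun u => if u = [] then some (some a) else none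
  | .sym (.inr _) => fun u => if u = [] then some none else none
  | .app t s => fun u =>
      match bt t [] with
      | some (some _) =>
          match u with
          | [] => bt t []
          | j :: v => if j = t.nArgs then bt s v else bt t u
      | _ => if u = [] then some none else none

end HORS

/-!
Rewriting is confluent: parallel reduction, which contracts any set of redexes at once, has the
diamond property (Tait–Martin-Löf), and its reflexive-transitive closure is that of `Step`.
The ⊥-transformation is monotone along rewriting, since a step either rewrites a ⊥-subtree or
acts below a terminal. So every reduct `s` of `t` has a common reduct `d` with `t'`, and
`bt s ⊑ bt d ⊑ ‖G_{t'}‖`; conversely every reduct of `t'` is one of `t`.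
-/

namespace Tm

variable {α : Type}

def headSym : Tm α → α
  | .sym a => a
  | .app t _ => t.headSym

def spineArgs : Tm α → List (Tm α)
  | .sym _ => []
  | .app t s => t.spineArgs ++ [s]

end Tm

section mkApp

variable {α : Type}

lemma mkApp_concat (h r : Tm α) (ts : List (Tm α)) :
    mkApp h (ts ++ [r]) = .app (mkApp h ts) r :=
  List.foldl_concat ..

lemma Tm.headSym_mkApp (h : Tm α) (ts : List (Tm α)) :
    (mkApp h ts).headSym = h.headSym := by
  induction ts using List.reverseRecOn with
  | nil => rfl
  | append_singleton ts r ih => rw [mkApp_concat, headSym, ih]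

lemma Tm.spineArgs_mkApp (h : Tm α) (ts : List (Tm α)) :
    (mkApp h ts).spineArgs = h.spineArgs ++ ts := by
  induction ts using List.reverseRecOn with
  | nil => simp [mkApp]
  | append_singleton ts r ih => rw [mkApp_concat, spineArgs, ih, List.append_assoc]

lemma mkApp_sym_inj {a b : α} {ts us : List (Tm α)}
    (h : mkApp (.sym a) ts = mkApp (.sym b) us) : a = b ∧ ts = us := by
  have hhead := congrArg Tm.headSym h
  have hargs := congrArg Tm.spineArgs h
  simp only [Tm.headSym_mkApp, Tm.spineArgs_mkApp, Tm.headSym, Tm.spineArgs,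
    List.nil_append] at hhead hargs
  exact ⟨hhead, hargs⟩

lemma sizeOf_lt_mkApp [SizeOf α] {x : Tm α} {ts : List (Tm α)} (hx : x ∈ ts) (h : Tm α) :
    sizeOf x < sizeOf (mkApp h ts) := by
  induction ts using List.reverseRecOn with
  | nil => cases hx
  | append_singleton ts r ih =>
    rw [mkApp_concat, Tm.app.sizeOf_spec]
    rcases List.mem_append.mp hx with hx | hx
    · have := ih hx
      omega
    · rw [List.mem_singleton.mp hx]
      omega

end mkApp

namespace HORS

open Relation

variable {G : HORS}

lemma inst_congr {R : G.T → G.T → Prop} (hsym : ∀ a, R (.sym a) (.sym a))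
    (happ : ∀ {l l' r r'}, R l l' → R r r' → R (.app l r) (.app l' r'))
    {k : ℕ} (e : Tm (G.Sig ⊕ G.Nt ⊕ Fin k)) {f g : Fin k → G.T} (h : ∀ i, R (f i) (g i)) :
    R (G.inst e f) (G.inst e g) := by
  induction e with
  | sym a =>
    rcases a with a | F | i
    · exact hsym _
    · exact hsym _
    · exact h i
  | app t s iht ihs => exact happ iht ihs

lemma reflTransGen_step_app {l l' r r' : G.T} (hl : ReflTransGen G.Step l l')
    (hr : ReflTransGen G.Step r r') : ReflTransGen G.Step (.app l r) (.app l' r') :=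
  (hl.lift (Tm.app · r) fun _ _ => Step.appL).trans (hr.lift (Tm.app l') fun _ _ => Step.appR)

variable (G) in
inductive Par : G.T → G.T → Prop
  | sym (a) : Par (.sym a) (.sym a)
  | app {t t' s s'} : Par t t' → Par s s' → Par (.app t s) (.app t' s')
  | head {F : G.Nt} {ts : List G.T} {e} (us : Fin (G.ntTy F).arity → G.T)
      (hr : G.rule F = some e) (hl : ts.length = (G.ntTy F).arity)
      (h : ∀ i, Par (ts.get (Fin.cast hl.symm i)) (us i)) :
      Par (mkApp (.sym (.inr F)) ts) (G.inst e us)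

lemma Par.refl : ∀ t : G.T, G.Par t t
  | .sym a => .sym a
  | .app t s => .app (Par.refl t) (Par.refl s)

lemma Par.inst {k : ℕ} (e : Tm (G.Sig ⊕ G.Nt ⊕ Fin k)) {f g : Fin k → G.T}
    (h : ∀ i, G.Par (f i) (g i)) : G.Par (G.inst e f) (G.inst e g) :=
  inst_congr Par.sym Par.app e h

lemma Step.par {t t' : G.T} (h : G.Step t t') : G.Par t t' := by
  induction h with
  | head hr hl => exact Par.head _ hr hl fun _ => Par.refl _
  | appL _ ih => exact Par.app ih (Par.refl _)
  | appR _ ih => exact Par.app (Par.refl _) ih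

lemma Par.reflTransGen_step {t t' : G.T} (h : G.Par t t') : ReflTransGen G.Step t t' := by
  induction h with
  | sym a => exact .refl
  | app _ _ ihl ihr => exact reflTransGen_step_app ihl ihr
  | head us hr hl _ ih =>
    exact .head (Step.head hr hl) (inst_congr (fun _ => .refl) reflTransGen_step_app _ ih)

lemma reflTransGen_step_eq_par : ReflTransGen G.Step = ReflTransGen G.Par :=
  le_antisymm (ReflTransGen.mono fun _ _ => Step.par)
    (reflTransGen_closed fun _ _ => Par.reflTransGen_step)

lemma Par.inv {t c : G.T} (h : G.Par t c) :
    (∃ a, t = .sym a ∧ c = .sym a) ∨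
    (∃ l r l' r', t = .app l r ∧ c = .app l' r' ∧ G.Par l l' ∧ G.Par r r') ∨
    ∃ (F : G.Nt) (ts : List G.T) (e : _) (hl : ts.length = (G.ntTy F).arity)
      (us : Fin (G.ntTy F).arity → G.T),
      t = mkApp (.sym (.inr F)) ts ∧ G.rule F = some e ∧
      (∀ i, G.Par (ts.get (Fin.cast hl.symm i)) (us i)) ∧ c = G.inst e us := by
  cases h with
  | sym a => exact .inl ⟨a, rfl, rfl⟩
  | app hl hr => exact .inr (.inl ⟨_, _, _, _, rfl, rfl, hl, hr⟩)
  | head us hr hl hus => exact .inr (.inr ⟨_, _, _, hl, us, rfl, hr, hus, rfl⟩)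

/-- The bound on `ts` rules out a contraction strictly inside the spine. -/
lemma Par.mkApp_nt_inv {F : G.Nt} {ts : List G.T} {b : G.T}
    (h : G.Par (mkApp (.sym (.inr F)) ts) b) (hlen : ts.length ≤ (G.ntTy F).arity) :
    (∃ us, List.Forall₂ G.Par ts us ∧ b = mkApp (.sym (.inr F)) us) ∨
    ∃ (e : _) (hl : ts.length = (G.ntTy F).arity) (us : Fin (G.ntTy F).arity → G.T),
      G.rule F = some e ∧ (∀ i, G.Par (ts.get (Fin.cast hl.symm i)) (us i)) ∧
      b = G.inst e us := by
  induction ts using List.reverseRecOn generalizing b with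
  | nil =>
    rcases h.inv with ⟨_, h1, rfl⟩ | ⟨_, _, _, _, h1, -⟩ | ⟨F', ts', e, hl, us, heq, hr, hus, rfl⟩
    · exact .inl ⟨[], .nil, h1.symm⟩
    · cases h1
    · obtain ⟨⟨⟩, rfl⟩ := mkApp_sym_inj (ts := []) heq
      exact .inr ⟨e, hl, us, hr, hus, rfl⟩
  | append_singleton ts r ih =>
    rw [mkApp_concat] at h
    rcases h.inv with ⟨_, h1, -⟩ | ⟨l, r, l', r', heq, rfl, pl, pr⟩ |
      ⟨F', ts', e, hl, us, heq, hr, hus, rfl⟩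
    · cases h1
    · obtain ⟨rfl, rfl⟩ := Tm.app.inj heq
      rw [List.length_append, List.length_singleton] at hlen
      rcases ih pl (by omega) with ⟨us, hus, rfl⟩ | ⟨-, hl, -⟩
      · exact .inl ⟨us ++ [r'], List.rel_append hus (.cons pr .nil), (mkApp_concat ..).symm⟩
      · omega
    · rw [← mkApp_concat] at heq
      obtain ⟨⟨⟩, rfl⟩ := mkApp_sym_inj heq
      exact .inr ⟨e, hl, us, hr, hus, rfl⟩

lemma Par.join_redex {F : G.Nt} {ts : List G.T} {e}
    (hr : G.rule F = some e) (hl : ts.length = (G.ntTy F).arity)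
    (hdiamond : ∀ x ∈ ts, ∀ {b c}, G.Par x b → G.Par x c → ∃ d, G.Par b d ∧ G.Par c d)
    {b : G.T} (hb : G.Par (mkApp (.sym (.inr F)) ts) b)
    {us : Fin (G.ntTy F).arity → G.T} (hus : ∀ i, G.Par (ts.get (Fin.cast hl.symm i)) (us i)) :
    ∃ d, G.Par b d ∧ G.Par (G.inst e us) d := by
  rcases hb.mkApp_nt_inv hl.le with ⟨us', hus', rfl⟩ | ⟨e', _, us', hr', hus', rfl⟩
  · have hl' : us'.length = (G.ntTy F).arity := hus'.length_eq ▸ hl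
    have hget : ∀ i, G.Par (ts.get (Fin.cast hl.symm i)) (us'.get (Fin.cast hl'.symm i)) :=
      fun i => (List.forall₂_iff_get.mp hus').2 i (by omega) (by omega)
    choose ws hws' hws using fun i => hdiamond _ (List.get_mem _ _) (hget i) (hus i)
    exact ⟨G.inst e ws, .head ws hr hl' hws', .inst e hws⟩
  · obtain rfl := Option.some.inj (hr'.symm.trans hr)
    choose ws hws' hws using fun i => hdiamond _ (List.get_mem _ _) (hus' i) (hus i)
    exact ⟨G.inst e' ws, .inst e' hws', .inst e' hws⟩

theorem Par.diamond {t b c : G.T} (hb : G.Par t b) (hc : G.Par t c) :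
    ∃ d, G.Par b d ∧ G.Par c d := by
  have hargs : ∀ {F ts}, t = mkApp (.sym (.inr F)) ts →
      ∀ x ∈ ts, ∀ {b c}, G.Par x b → G.Par x c → ∃ d, G.Par b d ∧ G.Par c d :=
    fun ht x hx _ _ hxb hxc =>
      have : sizeOf x < sizeOf t := ht ▸ sizeOf_lt_mkApp hx _
      Par.diamond hxb hxc
  cases hc with
  | sym a => exact ⟨b, .refl b, hb⟩
  | head us hr hl hus => exact hb.join_redex hr hl (hargs rfl) hus
  | app pl pr =>
    rcases hb.inv with ⟨_, h1, -⟩ | ⟨l, r, l', r', heq, rfl, ql, qr⟩ |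
      ⟨F, ts, e, hl, us, heq, hr, hus, rfl⟩
    · cases h1
    · obtain ⟨rfl, rfl⟩ := Tm.app.inj heq
      obtain ⟨dl, hdl, hdl'⟩ := Par.diamond ql pl
      obtain ⟨dr, hdr, hdr'⟩ := Par.diamond qr pr
      exact ⟨.app dl dr, .app hdl hdr, .app hdl' hdr'⟩
    · obtain ⟨d, hd, hd'⟩ := (heq ▸ Par.app pl pr).join_redex hr hl (hargs heq) hus
      exact ⟨d, hd', hd⟩
termination_by sizeOf t

lemma step_church_rosser {a b c : G.T} (hab : ReflTransGen G.Step a b)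
    (hac : ReflTransGen G.Step a c) : Join (ReflTransGen G.Step) b c := by
  rw [reflTransGen_step_eq_par] at *
  refine church_rosser (fun _ _ _ hb hc => ?_) hab hac
  obtain ⟨d, hbd, hcd⟩ := Par.diamond hb hc
  exact ⟨d, .single hbd, .single hcd⟩

end HORS

section TreeOrder

variable {σ : Type}

def LTree.bot : LTree σ := fun u => if u = [] then some none else none

lemma LTree.bot_le {w : LTree σ} {x} (h : w [] = some x) : TLe bot w := by
  intro u y hy
  by_cases hu : u = []
  · subst hu
    exact ⟨x, h, .inl (Option.some.inj hy).symm⟩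
  · simp [bot, hu] at hy

lemma TLe.refl (t : LTree σ) : TLe t t := fun _ x h => ⟨x, h, .inr rfl⟩

lemma TLe.trans {a b c : LTree σ} (hab : TLe a b) (hbc : TLe b c) : TLe a c := by
  intro u x hx
  obtain ⟨y, hy, hxy⟩ := hab u x hx
  obtain ⟨z, hz, hyz⟩ := hbc u y hy
  rcases hxy with rfl | rfl
  · exact ⟨z, hz, .inl rfl⟩
  · exact ⟨z, hz, hyz⟩

lemma TLe.antisymm {a b : LTree σ} (hab : TLe a b) (hba : TLe b a) : a = b := by
  funext u
  rcases ha : a u with _ | x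
  · rcases hb : b u with _ | y
    · rfl
    · obtain ⟨_, hz, -⟩ := hba u y hb
      simp [ha] at hz
  · obtain ⟨y, hy, hxy⟩ := hab u x ha
    obtain ⟨z, hz, hyz⟩ := hba u y hy
    rw [ha, Option.some.injEq] at hz
    subst hz
    rw [hy]
    rcases hxy with rfl | rfl <;> rcases hyz with h | h <;> simp_all

lemma IsTreeLub.le_of_forall_exists_le {A B : Set (LTree σ)} {v w : LTree σ}
    (hv : IsTreeLub A v) (hw : IsTreeLub B w) (h : ∀ x ∈ A, ∃ y ∈ B, TLe x y) : TLe v w :=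
  hv.2 w fun x hx =>
    let ⟨y, hy, hxy⟩ := h x hx
    hxy.trans (hw.1 y hy)

end TreeOrder

namespace HORS

variable {G : HORS}

lemma exists_bt_nil_eq_some (t : G.T) : ∃ x, G.bt t [] = some x := by
  induction t with
  | sym a => rcases a with a | F <;> exact ⟨_, rfl⟩
  | app t s iht _ =>
    obtain ⟨x, hx⟩ := iht
    refine ⟨x, ?_⟩
    rcases x with _ | a <;> simp [bt, hx]

lemma bt_app_nil (t s : G.T) : G.bt (.app t s) [] = G.bt t [] := by
  obtain ⟨x, hx⟩ := exists_bt_nil_eq_some t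
  rcases x with _ | a <;> simp [bt, hx]

lemma bt_app_of_nil_eq {t : G.T} {a} (h : G.bt t [] = some (some a)) (s : G.T) :
    G.bt (.app t s) = fun u =>
      match u with
      | [] => some (some a)
      | j :: v => if j = t.nArgs then G.bt s v else G.bt t (j :: v) := by
  funext u
  cases u <;> simp [bt, h]

lemma bt_app_of_nil_ne {t : G.T} (h : ∀ a, G.bt t [] ≠ some (some a)) (s : G.T) :
    G.bt (.app t s) = LTree.bot := by
  obtain ⟨_ | a, hx⟩ := exists_bt_nil_eq_some t
  · funext u
    simp [bt, hx, LTree.bot]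
  · exact absurd hx (h a)

lemma bt_mkApp_nt (F : G.Nt) (ts : List G.T) :
    G.bt (mkApp (.sym (.inr F)) ts) = LTree.bot := by
  induction ts using List.reverseRecOn with
  | nil => rfl
  | append_singleton ts r ih =>
    rw [mkApp_concat, bt_app_of_nil_ne]
    simp [ih, LTree.bot]

lemma bot_le_bt (t : G.T) : TLe LTree.bot (G.bt t) :=
  LTree.bot_le (exists_bt_nil_eq_some t).choose_spec

lemma Step.nArgs_eq_of_bt_nil {t t' : G.T} (h : G.Step t t') {a}
    (ha : G.bt t [] = some (some a)) :
    t'.nArgs = t.nArgs := by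
  induction h with
  | head => simp [bt_mkApp_nt, LTree.bot] at ha
  | appL _ ih =>
    rw [bt_app_nil] at ha
    simp [Tm.nArgs, ih ha]
  | appR => rfl

lemma bt_app_mono {l l' r r' : G.T} (hl : TLe (G.bt l) (G.bt l'))
    (hn : ∀ a, G.bt l [] = some (some a) → l'.nArgs = l.nArgs) (hr : TLe (G.bt r) (G.bt r')) :
    TLe (G.bt (.app l r)) (G.bt (.app l' r')) := by
  by_cases hroot : ∃ a, G.bt l [] = some (some a)
  · obtain ⟨a, ha⟩ := hroot
    obtain ⟨_, ha', h⟩ := hl [] _ ha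
    obtain rfl : _ = some a := by simpa using h
    rw [bt_app_of_nil_eq ha, bt_app_of_nil_eq ha', hn a ha]
    rintro (_ | ⟨j, v⟩) x hx
    · exact ⟨x, hx, .inr rfl⟩
    · by_cases hj : j = l.nArgs
      · simp only [if_pos hj] at hx ⊢
        exact hr v x hx
      · simp only [if_neg hj] at hx ⊢
        exact hl _ x hx
  · rw [bt_app_of_nil_ne (not_exists.mp hroot)]
    exact bot_le_bt _

lemma Step.bt_le {t t' : G.T} (h : G.Step t t') : TLe (G.bt t) (G.bt t') := by
  induction h with
  | head => rw [bt_mkApp_nt]; exact bot_le_bt _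
  | appL p ih => exact bt_app_mono ih (fun _ => p.nArgs_eq_of_bt_nil) (.refl _)
  | appR _ ih => exact bt_app_mono (.refl _) (fun _ _ => rfl) ih

lemma bt_le_of_reflTransGen {t t' : G.T} (h : Relation.ReflTransGen G.Step t t') :
    TLe (G.bt t) (G.bt t') := by
  induction h with
  | refl => exact .refl _
  | tail _ hst ih => exact ih.trans hst.bt_le

end HORS

/-- if t →_G t' then the value trees of the schemes started at
t and t' coincide. -/
theorem valtree_invariant_step (G : HORS) (t t' : G.T) (h : G.Step t t')
    (v v' : LTree G.Sig)
    (hv : IsTreeLub (G.bt '' {s | Relation.ReflTransGen G.Step t s}) v)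
    (hv' : IsTreeLub (G.bt '' {s | Relation.ReflTransGen G.Step t' s}) v') :
    v = v' := by
  refine TLe.antisymm (hv.le_of_forall_exists_le hv' ?_) (hv'.le_of_forall_exists_le hv ?_)
  · rintro _ ⟨s, hs, rfl⟩
    obtain ⟨d, hsd, ht'd⟩ := HORS.step_church_rosser hs (.single h)
    exact ⟨G.bt d, ⟨d, ht'd, rfl⟩, HORS.bt_le_of_reflTransGen hsd⟩
  · rintro _ ⟨s, hs, rfl⟩
    exact ⟨G.bt s, ⟨s, .head h hs, rfl⟩, .refl _⟩
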